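/- Let I ⊆ K[x₁,...,xₙ] be an ideal and g₁,...,g_k a Gröbner basis of I with respect to the lexicographic order with x₁ ≺ x₂ ≺ ... ≺ xₙ. Then for each j, the j-th elimination ideal I_j = I ∩ K[x₁,...,x_j] is generated by those g_i that lie in K[x₁,...,x_j], and {g_i : g_i ∈ K[x₁,...,x_j]} is a Gröbner basis of I_j. -/

import Mathlib

open MvPolynomial
open scoped MonomialOrder

variable {K : Type*} [Field K] {σ : Type*}

/-- The exponent of the leading term of a polynomial with respect to a monomial order
(the maximum of the support; `0` for the zero polynomial). -/
noncomputable def leadExp (m : MonomialOrder σ) (f : MvPolynomial σ K) : σ →₀ ℕ :=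
  m.toSyn.symm (f.support.sup fun α => m.toSyn α)

/-- `g₁,…,g_k` is a Gröbner basis of `I` w.r.t. the monomial order `m`: the `gᵢ` lie in `I`,
and the leading terms of the `gᵢ` generate the leading term ideal of `I`; equivalently, the
leading monomial of every nonzero `f ∈ I` is divisible by the leading monomial of some
nonzero `gᵢ`. -/
def IsGroebnerBasis (m : MonomialOrder σ) {k : ℕ} (g : Fin k → MvPolynomial σ K)
    (I : Ideal (MvPolynomial σ K)) : Prop :=
  (∀ i, g i ∈ I) ∧
    ∀ f ∈ I, f ≠ 0 → ∃ i, g i ≠ 0 ∧ leadExp m (g i) ≤ leadExp m f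

/-!
In the lex order every variable outside `K[x₁,…,x_j]` outweighs all monomials in `x₁,…,x_j`,
so a monomial lex-below a monomial of `K[x₁,…,x_j]` lies in `K[x₁,…,x_j]`: a polynomial lies in
`K[x₁,…,x_j]` exactly when its leading monomial does. Consequently a `gᵢ` whose leading monomial
divides that of some `f ∈ I_j` lies in `K[x₁,…,x_j]`, and dividing `f ∈ I_j` by the `gᵢ` in
`K[x₁,…,x_j]` produces quotients and remainder in `K[x₁,…,x_j]`. The remainder lies in `I_j` and
none of its monomials is divisible by the leading monomial of such a `gᵢ`, so it vanishes.
-/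

theorem leadExp_eq_degree (m : MonomialOrder σ) (f : MvPolynomial σ K) :
    leadExp m f = m.degree f :=
  rfl

section Lex

variable [LinearOrder σ]

theorem Finsupp.support_subset_of_toLex_le {S : Set σ} (hS : IsUpperSet S) {α β : σ →₀ ℕ}
    (h : toLex α ≤ toLex β) (hβ : ↑β.support ⊆ S) : ↑α.support ⊆ S := by
  intro v hv
  by_contra hvS
  have hβ_zero : ∀ w ≤ v, β w = 0 := fun w hw =>
    Finsupp.notMem_support_iff.mp fun hw' => hvS (hS hw (hβ hw'))
  rcases h.eq_or_lt with heq | hlt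
  · exact Finsupp.mem_support_iff.mp hv (by rw [toLex.injective heq]; exact hβ_zero v le_rfl)
  · obtain ⟨i, hagree, hlt⟩ := Finsupp.Lex.lt_iff.mp hlt
    have hvi : v < i := lt_of_not_ge fun hiv => by simp [hβ_zero i hiv] at hlt
    exact Finsupp.mem_support_iff.mp hv ((hagree v hvi).trans (hβ_zero v le_rfl))

variable [WellFoundedGT σ] {R : Type*} [CommSemiring R] {S : Set σ}

theorem MonomialOrder.lex_mem_supported_iff (hS : IsUpperSet S) {p : MvPolynomial σ R} :
    p ∈ supported R S ↔ ↑(lex.degree p).support ⊆ S := by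
  rw [mem_supported]
  constructor
  · intro hp v hv
    have hp0 : p ≠ 0 := by rintro rfl; simp at hv
    exact hp ((mem_vars_iff_mem_support v).mpr ⟨_, degree_mem_support hp0, hv⟩)
  · intro hdeg v hv
    obtain ⟨d, hd, hvd⟩ := (mem_vars_iff_mem_support v).mp hv
    exact Finsupp.support_subset_of_toLex_le hS (lex.le_degree hd) hdeg hvd

theorem MonomialOrder.lex_mem_supported_of_degree_le (hS : IsUpperSet S)
    {p q : MvPolynomial σ R} (hpq : lex.degree p ≼[lex] lex.degree q)
    (hq : q ∈ supported R S) : p ∈ supported R S :=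
  (lex_mem_supported_iff hS).2 <|
    Finsupp.support_subset_of_toLex_le hS hpq ((lex_mem_supported_iff hS).1 hq)

end Lex

theorem Subalgebra.span_le_comap_val {R A ι : Type*} [CommSemiring R] [CommSemiring A]
    [Algebra R A] (B : Subalgebra R A) {I : Ideal A} {g : ι → A} (hg : ∀ i, g i ∈ I) :
    Ideal.span {p : B | ∃ i, (p : A) = g i} ≤ I.comap B.val :=
  Ideal.span_le.mpr fun p ⟨i, hi⟩ => show (p : A) ∈ I from hi ▸ hg i

namespace IsGroebnerBasis

variable [LinearOrder σ] [WellFoundedGT σ] {k : ℕ} {g : Fin k → MvPolynomial σ K}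
  {I : Ideal (MvPolynomial σ K)} {S : Set σ}

theorem exists_mem_supported_degree_le (hGB : IsGroebnerBasis MonomialOrder.lex g I)
    (hS : IsUpperSet S) {f : MvPolynomial σ K} (hfS : f ∈ supported K S) (hfI : f ∈ I)
    (hf0 : f ≠ 0) :
    ∃ i, g i ∈ supported K S ∧ g i ≠ 0 ∧
      MonomialOrder.lex.degree (g i) ≤ MonomialOrder.lex.degree f := by
  obtain ⟨i, hgi0, hle⟩ := hGB.2 f hfI hf0
  exact ⟨i, MonomialOrder.lex_mem_supported_of_degree_le hS
    (MonomialOrder.lex.toSyn_monotone hle) hfS, hgi0, hle⟩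

theorem mem_span_of_mem_supported (hGB : IsGroebnerBasis MonomialOrder.lex g I)
    (hS : IsUpperSet S) (f : supported K S) (hfI : (f : MvPolynomial σ K) ∈ I) :
    f ∈ Ideal.span {p : supported K S | ∃ i, (p : MvPolynomial σ K) = g i} := by
  classical
  let ι := {i // g i ∈ supported K S ∧ g i ≠ 0}
  obtain ⟨c, r, hfr, hdeg, hr⟩ := MonomialOrder.lex.div (b := fun i : ι => g i)
    (fun i => MonomialOrder.isUnit_leadingCoeff.2 i.2.2) f
  have hc : ∀ i, c i ∈ supported K S := by
    intro i
    by_cases hci : c i = 0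
    · rw [hci]; exact Subalgebra.zero_mem _
    have hdeg_le : MonomialOrder.lex.degree (c i) ≤ MonomialOrder.lex.degree (g i * c i) := by
      rw [MonomialOrder.degree_mul i.2.2 hci]; exact le_add_self
    exact MonomialOrder.lex_mem_supported_of_degree_le hS
      ((MonomialOrder.lex.toSyn_monotone hdeg_le).trans (hdeg i)) f.2
  let q : supported K S := ∑ i ∈ c.support, ⟨c i, hc i⟩ * ⟨g i, i.2.1⟩
  have hq : (q : MvPolynomial σ K) = Finsupp.linearCombination _ (fun i : ι => g i) c := by
    simp [q, Finsupp.linearCombination_apply, Finsupp.sum]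
  have hq_span : q ∈ Ideal.span {p : supported K S | ∃ i, (p : MvPolynomial σ K) = g i} :=
    Ideal.sum_mem _ fun i _ => Ideal.mul_mem_left _ _ (Ideal.subset_span ⟨i, rfl⟩)
  have hq_I : (q : MvPolynomial σ K) ∈ I := (supported K S).span_le_comap_val hGB.1 hq_span
  have hr_eq : ((f - q : supported K S) : MvPolynomial σ K) = r := by
    rw [Subalgebra.coe_sub, hq, hfr, add_sub_cancel_left]
  have hr0 : r = 0 := by
    by_contra hr0
    obtain ⟨i, hiS, hi0, hle⟩ := exists_mem_supported_degree_le hGB hS (hr_eq ▸ (f - q).2)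
      (hr_eq ▸ I.sub_mem hfI hq_I) hr0
    exact hr _ (MonomialOrder.degree_mem_support hr0) ⟨i, hiS, hi0⟩ hle
  rw [sub_eq_zero.mp (Subtype.ext (hr_eq.trans hr0))]
  exact hq_span

end IsGroebnerBasis

theorem stmt_12_general {n k : ℕ} (I : Ideal (MvPolynomial (Fin n) K))
    (g : Fin k → MvPolynomial (Fin n) K)
    (hGB : IsGroebnerBasis (MonomialOrder.lex (σ := Fin n)) g I)
    (j : ℕ) (S : Set (Fin n)) (hS : S = {v : Fin n | n - j ≤ (v : ℕ)}) :
    (∀ f : supported K S,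
        (f : MvPolynomial (Fin n) K) ∈ I ↔
          f ∈ Ideal.span {p : supported K S | ∃ i, (p : MvPolynomial (Fin n) K) = g i}) ∧
      ∀ f : supported K S, (f : MvPolynomial (Fin n) K) ∈ I →
        (f : MvPolynomial (Fin n) K) ≠ 0 →
          ∃ i, g i ∈ supported K S ∧ g i ≠ 0 ∧
            leadExp (MonomialOrder.lex (σ := Fin n)) (g i) ≤
              leadExp (MonomialOrder.lex (σ := Fin n)) (f : MvPolynomial (Fin n) K) := by
  have hS_upper : IsUpperSet S := hS ▸ fun a b hab ha => le_trans ha (Fin.le_def.mp hab)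
  refine ⟨fun f => ⟨hGB.mem_span_of_mem_supported hS_upper f,
    fun hf => (supported K S).span_le_comap_val hGB.1 hf⟩,
    fun f hfI hf0 => ?_⟩
  simpa only [leadExp_eq_degree] using hGB.exists_mem_supported_degree_le hS_upper f.2 hfI hf0

/-- Elimination with lexicographic Gröbner bases. We identify `x_t` (for `1 ≤ t ≤ n`) with the
variable `X (n - t)` of `MvPolynomial (Fin n) K`; under Mathlib's lexicographic monomial order
(where `X 0` is the largest variable) this realizes the lex order with
`x₁ ≺ x₂ ≺ ⋯ ≺ xₙ`, and `K[x₁,…,x_j]` is the subalgebra `supported K S` of polynomials in the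
variables with index `≥ n - j`. If `g₁,…,g_k` is a Gröbner basis of `I` for this order, then the
`j`-th elimination ideal `I_j = I ∩ K[x₁,…,x_j]` is generated (as an ideal of `K[x₁,…,x_j]`) by
those `gᵢ` lying in `K[x₁,…,x_j]`, and these `gᵢ` form a Gröbner basis of `I_j`. -/
theorem stmt_12 {n k : ℕ} (I : Ideal (MvPolynomial (Fin n) K))
    (g : Fin k → MvPolynomial (Fin n) K)
    (hGB : IsGroebnerBasis (MonomialOrder.lex (σ := Fin n)) g I)
    (j : ℕ) (hj : j ≤ n) (S : Set (Fin n)) (hS : S = {v : Fin n | n - j ≤ (v : ℕ)}) :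
    (∀ f : supported K S,
        (f : MvPolynomial (Fin n) K) ∈ I ↔
          f ∈ Ideal.span {p : supported K S | ∃ i, (p : MvPolynomial (Fin n) K) = g i}) ∧
      ∀ f : supported K S, (f : MvPolynomial (Fin n) K) ∈ I →
        (f : MvPolynomial (Fin n) K) ≠ 0 →
          ∃ i, g i ∈ supported K S ∧ g i ≠ 0 ∧
            leadExp (MonomialOrder.lex (σ := Fin n)) (g i) ≤
              leadExp (MonomialOrder.lex (σ := Fin n)) (f : MvPolynomial (Fin n) K) :=
  stmt_12_general I g hGB j S hS
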